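/- Let R be a regular S-graded ring and let ε ∈ S be an idempotent element. If I is a homogeneous right ideal of R, maximal among the proper homogeneous right ideals of R, such that Ǐ is a modular homogeneous ideal of R of degree ε, then I ∩ R_ε is a maximal right ideal of the ring R_ε, and the largest two-sided ideal of R_ε contained in I ∩ R_ε is a modular two-sided ideal of the ring R_ε (i.e., it admits an element e ∈ R_ε with ea − a and ae − a in it for all a ∈ R_ε). -/

import Mathlib

/-!
Common framework: S-graded rings (rings that are direct sums of additive
subgroups indexed by a set S, with homogeneous products homogeneous),
homogeneous ideals, graded modules, and the various Brown--McCoy radicals.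
-/

universe u v w

/-- An `S`-graded ring structure on a (not necessarily unital or commutative)
associative ring `R`: a family of additive subgroups indexed by a nonempty set `S`
whose internal direct sum is `R`, such that whenever `R_s · R_t ≠ 0` there is
`u ∈ S` with `R_s · R_t ⊆ R_u`. -/
structure SGraded (S : Type v) (R : Type w) [NonUnitalRing R] where
  component : S → AddSubgroup R
  nonemptyS : Nonempty S
  independent : iSupIndep component
  iSup_eq_top : (⨆ s, component s) = ⊤
  mul_cond : ∀ s t : S, (∃ a ∈ component s, ∃ b ∈ component t, a * b ≠ 0) →
    ∃ u : S, ∀ a ∈ component s, ∀ b ∈ component t, a * b ∈ component u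

namespace SGraded

variable {S : Type v} {R : Type w} [NonUnitalRing R] (G : SGraded S R)

/-- A homogeneous element. -/
def Homog (a : R) : Prop := ∃ s, a ∈ G.component s

/-- The homogeneous part `A = ⋃ s, R_s` of `R`. -/
def homogPart : Set R := {a : R | G.Homog a}

/-- Two homogeneous elements are addable if one is `0` or they have the same degree. -/
def Addable (a b : R) : Prop := a = 0 ∨ b = 0 ∨ ∃ s, a ∈ G.component s ∧ b ∈ G.component s

/-- `ε ∈ S` is idempotent: `R_ε · R_ε ≠ 0` and `R_ε · R_ε ⊆ R_ε`. -/
def IsIdem (ε : S) : Prop :=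
  (∃ a ∈ G.component ε, ∃ b ∈ G.component ε, a * b ≠ 0) ∧
  ∀ a ∈ G.component ε, ∀ b ∈ G.component ε, a * b ∈ G.component ε

/-- Condition (Δ): the product of two nonidempotent degrees is never idempotent. -/
def CondDelta : Prop := ∀ s t u : S,
  (∃ a ∈ G.component s, ∃ b ∈ G.component t, a * b ≠ 0) →
  (∀ a ∈ G.component s, ∀ b ∈ G.component t, a * b ∈ G.component u) →
  ¬ G.IsIdem s → ¬ G.IsIdem t → ¬ G.IsIdem u

/-- Regularity (cancellativity) of the grading. -/
def Regular : Prop := ∀ a b c : R, G.Homog a → G.Homog b → G.Homog c →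
  a ≠ 0 → b ≠ 0 → c ≠ 0 →
  ((a * c ≠ 0 → b * c ≠ 0 → G.Addable (a * c) (b * c) → G.Addable a b) ∧
   (c * a ≠ 0 → c * b ≠ 0 → G.Addable (c * a) (c * b) → G.Addable a b))

end SGraded

section Rings

variable {R : Type w} [NonUnitalRing R]

/-- A right ideal of `R`, as an additive subgroup. -/
def IsRightIdeal (I : AddSubgroup R) : Prop := ∀ x ∈ I, ∀ r : R, x * r ∈ I

/-- A two-sided ideal of `R`, as an additive subgroup. -/
def IsTwoSidedIdeal' (I : AddSubgroup R) : Prop := ∀ x ∈ I, ∀ r : R, x * r ∈ I ∧ r * x ∈ I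

/-- The right ideal of `R` generated by a set. -/
def rightIdealGen (T : Set R) : AddSubgroup R :=
  sInf {I : AddSubgroup R | T ⊆ I ∧ IsRightIdeal I}

/-- A right ideal of the (sub)ring `E`, as an additive subgroup of `R` contained in `E`. -/
def IsRightIdealOn (E I : AddSubgroup R) : Prop := I ≤ E ∧ ∀ x ∈ I, ∀ r ∈ E, x * r ∈ I

/-- A two-sided ideal of the (sub)ring `E`. -/
def IsIdealOn (E I : AddSubgroup R) : Prop :=
  I ≤ E ∧ ∀ x ∈ I, ∀ r ∈ E, x * r ∈ I ∧ r * x ∈ I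

/-- The largest two-sided ideal of the (sub)ring `E` contained in `J`. -/
def coreOn (E J : AddSubgroup R) : AddSubgroup R :=
  sSup {K : AddSubgroup R | IsIdealOn E K ∧ K ≤ J}

/-- A maximal right ideal of the (sub)ring `E`. -/
def IsMaxRightIdealOn (E J : AddSubgroup R) : Prop :=
  IsRightIdealOn E J ∧ J ≠ E ∧ ∀ K : AddSubgroup R, IsRightIdealOn E K → J < K → K ≤ E → K = E

/-- A modular two-sided ideal of the (sub)ring `E`:
there is `e ∈ E` with `ea - a ∈ J` and `ae - a ∈ J` for all `a ∈ E`. -/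
def IsModularIdealOn (E J : AddSubgroup R) : Prop :=
  ∃ e ∈ E, ∀ a ∈ E, e * a - a ∈ J ∧ a * e - a ∈ J

/-- The classical Brown--McCoy radical of the (sub)ring `E`: the intersection of all
two-sided ideals `I` of `E` such that `E/I` is a simple ring with identity. -/
def brownMcCoyOn (E : AddSubgroup R) : Set R :=
  {a : R | a ∈ E ∧ ∀ I : AddSubgroup R, IsIdealOn E I → I ≠ E →
    IsModularIdealOn E I →
    (∀ K : AddSubgroup R, IsIdealOn E K → I ≤ K → K ≤ E → K = I ∨ K = E) → a ∈ I}

/-- `e` is a unity modulo `I`. -/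
def IsUnityMod (e : R) (I : AddSubgroup R) : Prop := ∀ a : R, e * a - a ∈ I ∧ a * e - a ∈ I

/-- `x` is a G-regular element of the (sub)ring `E`: there is no proper two-sided
ideal `I` of `E` such that `x` is a unity modulo `I`. -/
def GRegularOn (E : AddSubgroup R) (x : R) : Prop :=
  ∀ I : AddSubgroup R, IsIdealOn E I → I ≠ E →
    ¬ (∀ a ∈ E, x * a - a ∈ I ∧ a * x - a ∈ I)

end Rings

namespace SGraded

variable {S : Type v} {R : Type w} [NonUnitalRing R] (G : SGraded S R)

/-- An additive subgroup generated (as an additive group) by its homogeneous elements. -/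
def IsHomSubgroup (I : AddSubgroup R) : Prop :=
  I = AddSubgroup.closure {a : R | a ∈ I ∧ G.Homog a}

/-- A homogeneous right ideal of `R`. -/
def IsHomRightIdeal (I : AddSubgroup R) : Prop := IsRightIdeal I ∧ G.IsHomSubgroup I

/-- A homogeneous (two-sided) ideal of `R`. -/
def IsHomIdeal (I : AddSubgroup R) : Prop := IsTwoSidedIdeal' I ∧ G.IsHomSubgroup I

/-- `Ǐ`: the largest homogeneous ideal of `R` contained in `I`. -/
def core (I : AddSubgroup R) : AddSubgroup R :=
  sSup {J : AddSubgroup R | G.IsHomIdeal J ∧ J ≤ I}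

/-- A homogeneous right ideal, maximal among the proper homogeneous right ideals of `R`. -/
def IsMaxHomRightIdeal (I : AddSubgroup R) : Prop :=
  G.IsHomRightIdeal I ∧ I ≠ ⊤ ∧ ∀ K : AddSubgroup R, G.IsHomRightIdeal K → I < K → K = ⊤

/-- A modular homogeneous ideal of `R`: a homogeneous ideal admitting a homogeneous
unity modulo it. -/
def IsModularHomIdeal (I : AddSubgroup R) : Prop :=
  G.IsHomIdeal I ∧ ∃ e, G.Homog e ∧ IsUnityMod e I

/-- A homogeneous element is G-regular if it is a unity modulo no proper homogeneous
ideal of `R`. -/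
def GRegular (x : R) : Prop :=
  ∀ I : AddSubgroup R, G.IsHomIdeal I → I ≠ ⊤ → ¬ IsUnityMod x I

/-- The quotient graded ring `R/J` (graded by the images of the components) is a
regular simple graded ring whose identity is the image of a homogeneous element:
`R/J` is nonzero, regular, has an identity which is the image of a homogeneous
element of `R`, and has no homogeneous ideals other than `0` and `R/J`. -/
def QuotInM (J : AddSubgroup R) : Prop :=
  J ≠ ⊤ ∧
  (∃ e, G.Homog e ∧ IsUnityMod e J) ∧
  (∀ K : AddSubgroup R, G.IsHomIdeal K → J ≤ K → K = J ∨ K = ⊤) ∧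
  (∀ a b c : R, G.Homog a → G.Homog b → G.Homog c → a ∉ J → b ∉ J → c ∉ J →
    ((a * c ∉ J → b * c ∉ J → G.Addable (a * c) (b * c) → G.Addable a b) ∧
     (c * a ∉ J → c * b ∉ J → G.Addable (c * a) (c * b) → G.Addable a b)))

/-- The graded Brown--McCoy radical `𝒢(R)`: the intersection of all homogeneous right
ideals `I`, maximal among the proper homogeneous right ideals, such that `R/Ǐ` is a
regular simple graded ring with identity the image of a homogeneous element. -/
def gradedBM : Set R :=
  {a : R | ∀ I : AddSubgroup R, G.IsMaxHomRightIdeal I → G.QuotInM (G.core I) → a ∈ I}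

/-- The quotient right `R`-module `R/J` (graded by the images of the components) is a
graded-simple graded right `R`-module, phrased inside `R`. -/
def QuotGradedSimple (J : AddSubgroup R) : Prop :=
  (∃ x a : R, G.Homog x ∧ G.Homog a ∧ x * a ∉ J) ∧
  (∀ K : AddSubgroup R, G.IsHomRightIdeal K → J ≤ K → K = J ∨ K = ⊤) ∧
  (∀ I : AddSubgroup R, G.IsHomIdeal I → (∃ r : R, ∃ b ∈ I, r * b ∉ J) →
    ∃ b ∈ I, ∀ x : R, G.Homog x → x * b - x ∈ J)

end SGraded

/-- A graded right module over an `S`-graded ring `R`: a right `R`-module structure on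
an additive commutative group `M` together with a family of additive subgroups indexed
by a nonempty set `D` whose internal direct sum is `M` and with `M_d · R_s ⊆ M_t`. -/
structure GradedRightModule {S : Type v} {R : Type w} [NonUnitalRing R]
    (G : SGraded S R) (M : Type u) [AddCommGroup M] where
  smul : M → R → M
  add_smul : ∀ (x y : M) (a : R), smul (x + y) a = smul x a + smul y a
  smul_add : ∀ (x : M) (a b : R), smul x (a + b) = smul x a + smul x b
  smul_mul : ∀ (x : M) (a b : R), smul x (a * b) = smul (smul x a) b
  D : Type u
  nonemptyD : Nonempty D
  mcomp : D → AddSubgroup M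
  mindependent : iSupIndep mcomp
  miSup_eq_top : (⨆ d, mcomp d) = ⊤
  graded : ∀ (d : D) (s : S), ∃ t : D, ∀ x ∈ mcomp d, ∀ r ∈ G.component s, smul x r ∈ mcomp t

namespace GradedRightModule

variable {S : Type v} {R : Type w} [NonUnitalRing R] {G : SGraded S R}
  {M : Type u} [AddCommGroup M] (gm : GradedRightModule G M)

/-- A homogeneous element of `M`. -/
def HomogM (x : M) : Prop := ∃ d, x ∈ gm.mcomp d

/-- Addability of homogeneous elements of `M`. -/
def AddableM (x y : M) : Prop := x = 0 ∨ y = 0 ∨ ∃ d, x ∈ gm.mcomp d ∧ y ∈ gm.mcomp d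

/-- A homogeneous submodule of `M`: a submodule generated (as an additive group)
by its homogeneous elements. -/
def IsHomSubmodule (N : AddSubgroup M) : Prop :=
  (∀ x ∈ N, ∀ r : R, gm.smul x r ∈ N) ∧
  N = AddSubgroup.closure {x : M | x ∈ N ∧ gm.HomogM x}

/-- `M` is graded-irreducible. -/
def GradedIrreducible : Prop :=
  (∃ (x : M) (a : R), gm.HomogM x ∧ G.Homog a ∧ gm.smul x a ≠ 0) ∧
  ∀ N : AddSubgroup M, gm.IsHomSubmodule N → N = ⊥ ∨ N = ⊤

/-- `M` is graded-simple: graded-irreducible and for every homogeneous ideal `I` of `R`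
with `M·I ≠ 0` there is `b ∈ I` acting as identity on all homogeneous elements of `M`. -/
def GradedSimple : Prop :=
  gm.GradedIrreducible ∧
  ∀ I : AddSubgroup R, G.IsHomIdeal I → (∃ x : M, ∃ b ∈ I, gm.smul x b ≠ 0) →
    ∃ b ∈ I, ∀ x : M, gm.HomogM x → gm.smul x b = x

/-- `M` is a regular graded module. -/
def ModRegular : Prop :=
  ∀ (x : M) (a b : R), gm.HomogM x → G.Homog a → G.Homog b →
    gm.smul x a ≠ 0 → gm.smul x b ≠ 0 →
    gm.AddableM (gm.smul x a) (gm.smul x b) → G.Addable a b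

end GradedRightModule

/-- The large graded Brown--McCoy radical `G_l(R)`: the homogeneous elements
annihilating every graded-simple graded right `R`-module. -/
def largeGradedBM {S : Type v} {R : Type w} [NonUnitalRing R] (G : SGraded S R) : Set R :=
  {a : R | G.Homog a ∧ ∀ (M : Type u) [AddCommGroup M] (gm : GradedRightModule G M),
    gm.GradedSimple → ∀ x : M, gm.smul x a = 0}

variable {S : Type v} {R : Type w} [NonUnitalRing R]

/-! Let `e ∈ R_ε` be a unity modulo `Ǐ`. Then `e ∉ I`, and `Ǐ ∩ R_ε` is an ideal of `R_ε`
inside `I ∩ R_ε` modulo which `e` is a unity; this gives modularity.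

For maximality, let `K` be a right ideal of `R_ε` properly containing `I ∩ R_ε` and pick
`x ∈ K \ I`. The right ideal generated by `I` and `x` is homogeneous, hence all of `R`, and so
contains `e`. For `a ∈ R_ε`, every element `w` of it satisfies `w a ∈ K + N`, where `N` is the sum
of the components other than `R_ε`; since `K ∩ N = 0`, this gives `e a ∈ K` and then `a ∈ K`.
The crux is `k y ∈ K + N` for `k ∈ K` and homogeneous `y`: if `k y` has degree `ε`, either
`k e = 0`, so that `k ∈ Ǐ`, or `k y` and `k e` are nonzero of the same degree and regularity
forces `y ∈ R_ε`. -/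

theorem eq_top_of_isUnityMod_mem {I J : AddSubgroup R} {e : R} (hI : IsRightIdeal I)
    (hJI : J ≤ I) (he : IsUnityMod e J) (heI : e ∈ I) : I = ⊤ :=
  (AddSubgroup.eq_top_iff' I).mpr fun a =>
    sub_sub_cancel (e * a) a ▸ sub_mem (hI e heI a) (hJI (he a).1)

theorem isRightIdeal_closure {T : Set R} (hT : ∀ t ∈ T, ∀ r, t * r ∈ AddSubgroup.closure T) :
    IsRightIdeal (AddSubgroup.closure T) := by
  intro x hx r
  have hle : AddSubgroup.closure T ≤ (AddSubgroup.closure T).comap (AddMonoidHom.mulRight r) :=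
    (AddSubgroup.closure_le _).mpr fun t ht => hT t ht r
  exact hle hx

theorem isRightIdealOn_inf {E I : AddSubgroup R} (hI : IsRightIdeal I)
    (hE : ∀ a ∈ E, ∀ b ∈ E, a * b ∈ E) : IsRightIdealOn E (I ⊓ E) :=
  ⟨inf_le_right, fun x hx r hr => ⟨hI x hx.1 r, hE x hx.2 r hr⟩⟩

theorem inf_le_coreOn {E I J : AddSubgroup R} (hJ : IsTwoSidedIdeal' J)
    (hE : ∀ a ∈ E, ∀ b ∈ E, a * b ∈ E) (hJI : J ≤ I) : J ⊓ E ≤ coreOn E (I ⊓ E) :=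
  le_sSup ⟨⟨inf_le_right, fun x hx r hr =>
    ⟨⟨(hJ x hx.1 r).1, hE x hx.2 r hr⟩, ⟨(hJ x hx.1 r).2, hE r hr x hx.2⟩⟩⟩,
    inf_le_inf_right E hJI⟩

theorem isModularIdealOn_coreOn_inf {E I J : AddSubgroup R} {e : R} (hJ : IsTwoSidedIdeal' J)
    (hE : ∀ a ∈ E, ∀ b ∈ E, a * b ∈ E) (hJI : J ≤ I) (heE : e ∈ E) (he : IsUnityMod e J) :
    IsModularIdealOn E (coreOn E (I ⊓ E)) :=
  ⟨e, heE, fun a ha => ⟨inf_le_coreOn hJ hE hJI ⟨(he a).1, E.sub_mem (hE e heE a ha) ha⟩,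
    inf_le_coreOn hJ hE hJI ⟨(he a).2, E.sub_mem (hE a ha e heE) ha⟩⟩⟩

namespace SGraded

variable (G : SGraded S R)

def complComponent (ε : S) : AddSubgroup R := ⨆ (s) (_ : s ≠ ε), G.component s

theorem disjoint_complComponent (ε : S) : Disjoint (G.component ε) (G.complComponent ε) :=
  G.independent ε

theorem component_le_complComponent {s ε : S} (h : s ≠ ε) :
    G.component s ≤ G.complComponent ε :=
  le_iSup₂ (f := fun j (_ : j ≠ ε) => G.component j) s h

theorem eq_of_mem_component {x : R} {s t : S} (hs : x ∈ G.component s)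
    (ht : x ∈ G.component t) (hx : x ≠ 0) : s = t := by
  by_contra hst
  exact hx ((G.disjoint_complComponent t).le_bot ⟨ht, G.component_le_complComponent hst hs⟩)

theorem mem_of_mem_sup_complComponent {K : AddSubgroup R} {ε : S} {x : R}
    (hK : K ≤ G.component ε) (hx : x ∈ G.component ε) (h : x ∈ K ⊔ G.complComponent ε) :
    x ∈ K := by
  obtain ⟨y, hy, z, hz, rfl⟩ := AddSubgroup.mem_sup.mp h
  have hzε : z ∈ G.component ε := by
    simpa only [add_sub_cancel_left] using (G.component ε).sub_mem hx (hK hy)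
  rwa [(G.disjoint_complComponent ε).le_bot ⟨hzε, hz⟩, add_zero]

theorem map_mem_of_forall_component {M : Type*} [AddGroup M] (f : R →+ M) (H : AddSubgroup M)
    (h : ∀ s, ∀ y ∈ G.component s, f y ∈ H) (y : R) : f y ∈ H := by
  have hle : ⊤ ≤ H.comap f := by
    rw [← G.iSup_eq_top]
    exact iSup_le fun s z hz => h s z hz
  exact hle trivial

variable {G}

theorem Homog.mul {a b : R} (ha : G.Homog a) (hb : G.Homog b) : G.Homog (a * b) := by
  obtain ⟨s, hs⟩ := ha
  obtain ⟨t, ht⟩ := hb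
  by_cases hab : a * b = 0
  · exact ⟨s, hab ▸ zero_mem _⟩
  · obtain ⟨u, hu⟩ := G.mul_cond s t ⟨a, hs, b, ht, hab⟩
    exact ⟨u, hu a hs b ht⟩

theorem Regular.mem_component_of_mul_left (hreg : G.Regular) {a b c : R} {s t : S}
    (ha : G.Homog a) (hc : G.Homog c) (hb : b ∈ G.component s)
    (hca : c * a ∈ G.component t) (hcb : c * b ∈ G.component t)
    (hca0 : c * a ≠ 0) (hcb0 : c * b ≠ 0) : a ∈ G.component s := by
  have ha0 : a ≠ 0 := by rintro rfl; simp at hca0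
  have hb0 : b ≠ 0 := by rintro rfl; simp at hcb0
  have hc0 : c ≠ 0 := by rintro rfl; simp at hca0
  rcases (hreg a b c ha ⟨s, hb⟩ hc ha0 hb0 hc0).2 hca0 hcb0 (Or.inr (Or.inr ⟨t, hca, hcb⟩)) with
    h | h | ⟨s', has', hbs'⟩
  · exact absurd h ha0
  · exact absurd h hb0
  · rwa [← G.eq_of_mem_component hbs' hb hb0]

theorem IsHomSubgroup.le_inf_sup_complComponent {H : AddSubgroup R} (hH : G.IsHomSubgroup H)
    (ε : S) : H ≤ (H ⊓ G.component ε) ⊔ G.complComponent ε := by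
  rw [hH, AddSubgroup.closure_le]
  rintro x ⟨hxH, s, hxs⟩
  by_cases hs : s = ε
  · subst hs
    exact AddSubgroup.mem_sup_left ⟨hH ▸ hxH, hxs⟩
  · exact AddSubgroup.mem_sup_right (G.component_le_complComponent hs hxs)

theorem core_le (I : AddSubgroup R) : G.core I ≤ I :=
  sSup_le fun _ hJ => hJ.2

def adjoinRight (I : AddSubgroup R) (x : R) : AddSubgroup R :=
  AddSubgroup.closure ((I : Set R) ∪ {x} ∪ Set.range (x * ·))

theorem le_adjoinRight (I : AddSubgroup R) (x : R) : I ≤ adjoinRight I x :=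
  fun _ hy => AddSubgroup.subset_closure (Or.inl (Or.inl hy))

theorem mem_adjoinRight (I : AddSubgroup R) (x : R) : x ∈ adjoinRight I x :=
  AddSubgroup.subset_closure (Or.inl (Or.inr rfl))

theorem mul_mem_adjoinRight (I : AddSubgroup R) (x r : R) : x * r ∈ adjoinRight I x :=
  AddSubgroup.subset_closure (Or.inr ⟨r, rfl⟩)

theorem isHomRightIdeal_adjoinRight {I : AddSubgroup R} {x : R} (hI : G.IsHomRightIdeal I)
    (hx : G.Homog x) : G.IsHomRightIdeal (adjoinRight I x) := by
  refine ⟨isRightIdeal_closure ?_, le_antisymm ?_ ((AddSubgroup.closure_le _).mpr fun a ha => ha.1)⟩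
  · rintro t ((ht | ht) | ⟨r', rfl⟩) r
    · exact le_adjoinRight I x (hI.1 t ht r)
    · rw [Set.mem_singleton_iff.mp ht]
      exact mul_mem_adjoinRight I x r
    · change x * r' * r ∈ adjoinRight I x
      rw [mul_assoc]
      exact mul_mem_adjoinRight I x (r' * r)
  · refine (AddSubgroup.closure_le _).mpr ?_
    rintro t ((ht | ht) | ⟨r, rfl⟩)
    · have hsub : {a | a ∈ I ∧ G.Homog a} ⊆ {a | a ∈ adjoinRight I x ∧ G.Homog a} :=
        fun a ha => ⟨le_adjoinRight I x ha.1, ha.2⟩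
      exact hI.2.le.trans (AddSubgroup.closure_mono hsub) ht
    · rw [Set.mem_singleton_iff.mp ht]
      exact AddSubgroup.subset_closure ⟨mem_adjoinRight I x, hx⟩
    · refine G.map_mem_of_forall_component (AddMonoidHom.mulLeft x) _ (fun s y hy => ?_) r
      exact AddSubgroup.subset_closure ⟨mul_mem_adjoinRight I x y, hx.mul ⟨s, hy⟩⟩

section Maximality

variable {ε : S} {e : R} {J K : AddSubgroup R}

theorem mul_mem_sup_complComponent (hreg : G.Regular)
    (hε : ∀ a ∈ G.component ε, ∀ b ∈ G.component ε, a * b ∈ G.component ε)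
    (heε : e ∈ G.component ε) (hJ : IsTwoSidedIdeal' J) (he : IsUnityMod e J)
    (hK : IsRightIdealOn (G.component ε) K) (hJK : J ⊓ G.component ε ≤ K)
    {k : R} (hk : k ∈ K) (y : R) : k * y ∈ K ⊔ G.complComponent ε := by
  refine G.map_mem_of_forall_component (AddMonoidHom.mulLeft k) _ (fun s z hz => ?_) y
  change k * z ∈ K ⊔ G.complComponent ε
  have hkε := hK.1 hk
  by_cases hkz : k * z = 0
  · rw [hkz]
    exact zero_mem _
  obtain ⟨u, hu⟩ := G.mul_cond ε s ⟨k, hkε, z, hz, hkz⟩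
  by_cases huε : u = ε
  swap
  · exact AddSubgroup.mem_sup_right (G.component_le_complComponent huε (hu k hkε z hz))
  subst huε
  refine AddSubgroup.mem_sup_left ?_
  by_cases hke : k * e = 0
  · have hkJ : k ∈ J := neg_mem_iff.mp (by simpa [hke] using (he k).2)
    exact hJK ⟨(hJ k hkJ z).1, hu k hkε z hz⟩
  · have hzε : z ∈ G.component u := hreg.mem_component_of_mul_left ⟨s, hz⟩ ⟨u, hkε⟩ heε
      (hu k hkε z hz) (hε k hkε e heε) hkz hke
    exact hK.2 k hk z hzε

theorem component_le_of_inf_lt {I : AddSubgroup R} (hreg : G.Regular)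
    (hε : ∀ a ∈ G.component ε, ∀ b ∈ G.component ε, a * b ∈ G.component ε)
    (hI : G.IsMaxHomRightIdeal I) (hcore : IsTwoSidedIdeal' (G.core I))
    (heε : e ∈ G.component ε) (he : IsUnityMod e (G.core I))
    (hK : IsRightIdealOn (G.component ε) K) (hIK : I ⊓ G.component ε < K) :
    G.component ε ≤ K := by
  obtain ⟨x, hxK, hxI⟩ := SetLike.exists_of_lt hIK
  have hxε : x ∈ G.component ε := hK.1 hxK
  have hxI : x ∉ I := fun h => hxI ⟨h, hxε⟩
  have htop : adjoinRight I x = ⊤ := hI.2.2 _ (isHomRightIdeal_adjoinRight hI.1 ⟨ε, hxε⟩)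
    (SetLike.lt_iff_le_and_exists.mpr ⟨le_adjoinRight I x, x, mem_adjoinRight I x, hxI⟩)
  have hcoreK : G.core I ⊓ G.component ε ≤ K := (inf_le_inf_right _ (core_le I)).trans hIK.le
  intro a ha
  have hmul : ∀ w ∈ adjoinRight I x, w * a ∈ K ⊔ G.complComponent ε := by
    suffices adjoinRight I x ≤ (K ⊔ G.complComponent ε).comap (AddMonoidHom.mulRight a) from
      fun w hw => this hw
    refine (AddSubgroup.closure_le _).mpr ?_
    rintro t ((ht | ht) | ⟨r, rfl⟩)
    · exact sup_le_sup_right hIK.le _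
        (hI.1.2.le_inf_sup_complComponent ε (hI.1.1 t ht a))
    · rw [Set.mem_singleton_iff.mp ht]
      exact AddSubgroup.mem_sup_left (hK.2 x hxK a ha)
    · change x * r * a ∈ K ⊔ G.complComponent ε
      rw [mul_assoc]
      exact mul_mem_sup_complComponent hreg hε heε hcore he hK hcoreK hxK (r * a)
  have heaK : e * a ∈ K := G.mem_of_mem_sup_complComponent hK.1 (hε e heε a ha)
    (hmul e (htop ▸ trivial))
  simpa only [sub_sub_cancel] using
    K.sub_mem heaK (hIK.le ⟨core_le I (he a).1, (G.component ε).sub_mem (hε e heε a ha) ha⟩)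

end Maximality

end SGraded

/-- Let `R` be a regular `S`-graded ring, `ε ∈ S` idempotent and `I`
a homogeneous right ideal maximal among the proper homogeneous right ideals, with `Ǐ`
a modular homogeneous ideal of degree `ε`. Then `I ∩ R_ε` is a maximal right ideal of
the ring `R_ε` and the largest two-sided ideal of `R_ε` contained in `I ∩ R_ε` is a
modular two-sided ideal of `R_ε`. -/
theorem maxHomRightIdeal_inter_component (G : SGraded S R) (hreg : G.Regular)
    (ε : S) (hε : G.IsIdem ε) (I : AddSubgroup R)
    (hI : G.IsMaxHomRightIdeal I) (hmod : G.IsModularHomIdeal (G.core I))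
    (hdeg : ∃ e, e ≠ 0 ∧ e ∈ G.component ε ∧ IsUnityMod e (G.core I)) :
    IsMaxRightIdealOn (G.component ε) (I ⊓ G.component ε) ∧
    IsModularIdealOn (G.component ε) (coreOn (G.component ε) (I ⊓ G.component ε)) := by
  obtain ⟨e, -, heε, he⟩ := hdeg
  have hcore : IsTwoSidedIdeal' (G.core I) := hmod.1.1
  have heI : e ∉ I := fun heI => hI.2.1 (eq_top_of_isUnityMod_mem hI.1.1 (G.core_le I) he heI)
  refine ⟨⟨isRightIdealOn_inf hI.1.1 hε.2, fun h => heI (h.symm ▸ heε : e ∈ I ⊓ G.component ε).1,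
    fun K hK hIK _ => le_antisymm hK.1 ?_⟩,
    isModularIdealOn_coreOn_inf hcore hε.2 (G.core_le I) heε he⟩
  exact G.component_le_of_inf_lt hreg hε.2 hI hcore heε he hK hIK
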